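/- For all integers λ, μ, ν with 0 ≤ ν < μ ≤ λ, the identity [ν+1]·( [λ+μ−2ν; μ−ν] − [λ+μ−1−2ν; μ−1−ν] ) = [μ+1]·[λ+μ−1−2ν; μ−ν] − [λ+μ−1−2ν]·[λ+μ−2−2ν; μ−1−ν] holds in the polynomial ring ℤ[u]. -/
import Mathlib


open Polynomial Finset

/-- The Gaussian binomial coefficient `[n; k] ∈ ℤ[u]`, defined as
`∏_{i=1}^{k} (1 − u^{n−i+1})/(1 − u^i)` for `0 ≤ k ≤ n`, and `0` otherwise. -/
noncomputable def gb (n : ℕ) (k : ℤ) : Polynomial ℤ :=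
  if 0 ≤ k ∧ k ≤ (n : ℤ) then
    (∏ i ∈ Finset.Icc 1 k.toNat, ((X : Polynomial ℤ) ^ (n - i + 1) - 1)) /ₘ
      (∏ i ∈ Finset.Icc 1 k.toNat, ((X : Polynomial ℤ) ^ i - 1))
  else 0

/-- The quantum integer `[n] := (1 − u^n)/(1 − u) = 1 + u + ⋯ + u^{n−1} ∈ ℤ[u]`. -/
noncomputable def qint (n : ℕ) : Polynomial ℤ :=
  ∑ i ∈ Finset.range n, (X : Polynomial ℤ) ^ i

/-- Recursive Gaussian binomial. -/
noncomputable def gb' : ℕ → ℕ → Polynomial ℤ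
  | _, 0 => 1
  | 0, _+1 => 0
  | n+1, k+1 => X ^ (k+1) * gb' n (k+1) + gb' n k

noncomputable def Dp (k : ℕ) : Polynomial ℤ :=
  ∏ i ∈ Finset.range k, ((X : Polynomial ℤ) ^ (i+1) - 1)

noncomputable def Np (n k : ℕ) : Polynomial ℤ :=
  ∏ i ∈ Finset.range k, ((X : Polynomial ℤ) ^ (n-i) - 1)

lemma Dp_monic (k : ℕ) : (Dp k).Monic := by
  apply monic_prod_of_monic
  intro i _
  simpa using monic_X_pow_sub_C (1 : ℤ) (Nat.succ_ne_zero i)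

lemma gb'_eq_zero : ∀ n k, n < k → gb' n k = 0 := by
  intro n
  induction n with
  | zero => intro k hk; match k with | k+1 => rfl
  | succ n ih =>
    intro k hk
    match k with
    | k+1 =>
      rw [gb', ih (k+1) (by omega), ih k (by omega)]
      simp

lemma key : ∀ n k, k ≤ n → Dp k * gb' n k = Np n k := by
  intro n
  induction n with
  | zero =>
    intro k hk
    interval_cases k
    simp [Dp, Np, gb']
  | succ n ih =>
    intro k hk
    match k with
    | 0 => simp [Dp, Np, gb']
    | k+1 =>
      rw [gb']
      have hNs : Np (n+1) (k+1) = (X ^ (n+1) - 1) * Np n k := by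
        rw [Np, Finset.prod_range_succ']
        simp only [Nat.succ_sub_succ_eq_sub, Nat.sub_zero]
        rw [mul_comm]
        rfl
      have hD : Dp (k+1) = Dp k * (X ^ (k+1) - 1) := by
        rw [Dp, Finset.prod_range_succ]; rfl
      by_cases hkn : k + 1 ≤ n
      · have h1 := ih (k+1) hkn
        have h2 := ih k (le_of_lt hkn)
        have hN : Np n (k+1) = Np n k * (X ^ (n-k) - 1) := by
          rw [Np, Finset.prod_range_succ]; rfl
        have hx : (X : Polynomial ℤ) ^ (k+1) * X ^ (n-k) = X ^ (n+1) := by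
          rw [← pow_add]; congr 1; omega
        calc Dp (k+1) * (X ^ (k+1) * gb' n (k+1) + gb' n k)
            = X ^ (k+1) * (Dp (k+1) * gb' n (k+1)) + (X^(k+1) - 1) * (Dp k * gb' n k) := by
              rw [hD]; ring
          _ = X ^ (k+1) * (Np n (k+1)) + (X^(k+1)-1) * Np n k := by rw [h1, h2]
          _ = Np (n+1) (k+1) := by rw [hN, hNs, ← hx]; ring
      · have hk' : k = n := by omega
        subst hk'
        rw [gb'_eq_zero _ _ (by omega)]
        have h2 := ih _ le_rfl
        rw [hD]
        calc Dp k * (X ^ (k+1) - 1) * (X ^ (k+1) * 0 + gb' k k)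
            = (X ^ (k+1) - 1) * (Dp k * gb' k k) := by ring
          _ = Np (k+1) (k+1) := by rw [h2, hNs]

lemma Np_succ (n k : ℕ) : Np (n+1) (k+1) = (X ^ (n+1) - 1) * Np n k := by
  rw [Np, Finset.prod_range_succ']
  simp only [Nat.succ_sub_succ_eq_sub, Nat.sub_zero]
  rw [mul_comm]
  rfl

lemma Icc_prod_eq (f : ℕ → Polynomial ℤ) (k : ℕ) :
    ∏ i ∈ Finset.Icc 1 k, f i = ∏ i ∈ Finset.range k, f (i+1) := by
  rw [← Finset.Ico_add_one_right_eq_Icc, Finset.prod_Ico_eq_prod_range]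
  simp [add_comm]

lemma Dp_eq_succ (b : ℕ) : Dp (b+1) = Dp b * (X ^ (b+1) - 1) := by
  rw [Dp, Dp, Finset.prod_range_succ]

lemma gb_eq_gb' (n k : ℕ) (h : k ≤ n) : gb n (k : ℤ) = gb' n k := by
  rw [gb, if_pos ⟨Int.natCast_nonneg k, by exact_mod_cast h⟩]
  have hD : (∏ i ∈ Finset.Icc 1 ((k:ℤ)).toNat, ((X : Polynomial ℤ) ^ i - 1)) = Dp k := by
    rw [Int.toNat_natCast, Icc_prod_eq, Dp]
  have hN : (∏ i ∈ Finset.Icc 1 ((k:ℤ)).toNat, ((X : Polynomial ℤ) ^ (n - i + 1) - 1)) = Np n k := by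
    rw [Int.toNat_natCast, Icc_prod_eq, Np]
    refine Finset.prod_congr rfl fun i hi => ?_
    rw [Finset.mem_range] at hi
    have : n - (i + 1) + 1 = n - i := by omega
    rw [this]
  rw [hD, hN, ← key n k h, mul_divByMonic_cancel_left _ (Dp_monic k)]

lemma qint_mul_X_sub_one (n : ℕ) : qint n * (X - 1) = X ^ n - 1 := geom_sum_mul X n

lemma qint_add (m n : ℕ) : qint (m + n) = qint m + X ^ m * qint n := by
  rw [qint, Finset.sum_range_add, qint, qint, Finset.mul_sum]
  simp [pow_add]

lemma sym (a b : ℕ) (h : b ≤ a) :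
    qint (a+1) * gb' a b = qint (b+1) * gb' (a+1) (b+1) := by
  have hX : (X - 1 : Polynomial ℤ) ≠ 0 := by simpa using X_sub_C_ne_zero (1 : ℤ)
  have hDp : Dp b ≠ 0 := (Dp_monic b).ne_zero
  apply mul_right_cancel₀ hX
  apply mul_left_cancel₀ hDp
  calc Dp b * (qint (a+1) * gb' a b * (X-1))
      = (qint (a+1) * (X-1)) * (Dp b * gb' a b) := by ring
    _ = (X^(a+1) - 1) * Np a b := by rw [qint_mul_X_sub_one, key a b h]
    _ = Np (a+1) (b+1) := (Np_succ a b).symm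
    _ = Dp (b+1) * gb' (a+1) (b+1) := (key (a+1) (b+1) (by omega)).symm
    _ = Dp b * (qint (b+1) * gb' (a+1) (b+1) * (X-1)) := by
        rw [Dp_eq_succ]
        linear_combination (-(Dp b * gb' (a+1) (b+1))) * qint_mul_X_sub_one (b+1)

/-- For all integers `λ, μ, ν` with `0 ≤ ν < μ ≤ λ`, the identity
`[ν+1]·([λ+μ−2ν; μ−ν] − [λ+μ−1−2ν; μ−1−ν])
  = [μ+1]·[λ+μ−1−2ν; μ−ν] − [λ+μ−1−2ν]·[λ+μ−2−2ν; μ−1−ν]`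
holds in `ℤ[u]`. -/
theorem stmt_3 (lam mu nu : ℕ) (h1 : nu < mu) (h2 : mu ≤ lam) :
    qint (nu + 1) *
        (gb (lam + mu - 2 * nu) ((mu : ℤ) - nu) -
          gb (lam + mu - 1 - 2 * nu) ((mu : ℤ) - 1 - nu)) =
      qint (mu + 1) * gb (lam + mu - 1 - 2 * nu) ((mu : ℤ) - nu) -
        qint (lam + mu - 1 - 2 * nu) * gb (lam + mu - 2 - 2 * nu) ((mu : ℤ) - 1 - nu) := by
  obtain ⟨m, rfl⟩ : ∃ m, mu = nu + 1 + m := ⟨mu - nu - 1, by omega⟩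
  obtain ⟨c, rfl⟩ : ∃ c, lam = nu + 1 + m + c := ⟨lam - (nu + 1 + m), by omega⟩
  have e1 : nu + 1 + m + c + (nu + 1 + m) - 2 * nu = c + m + 2 + m := by omega
  have e2 : nu + 1 + m + c + (nu + 1 + m) - 1 - 2 * nu = c + m + 1 + m := by omega
  have e3 : nu + 1 + m + c + (nu + 1 + m) - 2 - 2 * nu = c + m + m := by omega
  have f1 : ((nu + 1 + m : ℕ) : ℤ) - nu = ((m + 1 : ℕ) : ℤ) := by push_cast; ring
  have f2 : ((nu + 1 + m : ℕ) : ℤ) - 1 - nu = ((m : ℕ) : ℤ) := by push_cast; ring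
  rw [e1, e2, e3, f1, f2,
    gb_eq_gb' (c + m + 2 + m) (m + 1) (by omega),
    gb_eq_gb' (c + m + 1 + m) m (by omega),
    gb_eq_gb' (c + m + 1 + m) (m + 1) (by omega),
    gb_eq_gb' (c + m + m) m (by omega)]
  rw [show c + m + 2 + m = c + m + 1 + m + 1 from by omega]
  have pas : gb' (c + m + 1 + m + 1) (m + 1)
      = X ^ (m + 1) * gb' (c + m + 1 + m) (m + 1) + gb' (c + m + 1 + m) m := by
    rw [gb']
  have hs : qint (c + m + 1 + m) * gb' (c + m + m) m
      = qint (m + 1) * gb' (c + m + 1 + m) (m + 1) := by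
    have := sym (c + m + m) m (by omega)
    rw [show c + m + m + 1 = c + m + 1 + m by omega] at this
    exact this
  have hq : qint (nu + 1 + m + 1) = qint (m + 1) + X ^ (m + 1) * qint (nu + 1) := by
    rw [show nu + 1 + m + 1 = (m + 1) + (nu + 1) by omega, qint_add]
  rw [pas, hs, hq]
  ring
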